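/- The metabelian Baumslag–Solitar group G = BS(1,11) = ⟨a, b | a·b·a^{-1} = b^{11}⟩ has a normally generating pair of infinite recalcitrance: there exists a pair (s_1, s_2) ∈ G² whose normal closure is G such that no finite sequence of M-transformations transforms (s_1, s_2) into a generating pair of G. -/

import Mathlib

/-- Elements of `ℚ ⋊ ℤ` with `(x,e)·(y,f) = (x + 11^e y, e+f)`. -/
structure HH where
  x : ℚ
  e : ℤ

namespace HH

lemma eleven_ne : (11:ℚ) ≠ 0 := by norm_num

instance : Mul HH := ⟨fun g h => ⟨g.x + (11:ℚ)^g.e * h.x, g.e + h.e⟩⟩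
instance : One HH := ⟨⟨0, 0⟩⟩
instance : Inv HH := ⟨fun g => ⟨-((11:ℚ)^(-g.e) * g.x), -g.e⟩⟩

@[simp] lemma mul_x (g h : HH) : (g * h).x = g.x + (11:ℚ)^g.e * h.x := rfl
@[simp] lemma mul_e (g h : HH) : (g * h).e = g.e + h.e := rfl
@[simp] lemma one_x : (1 : HH).x = 0 := rfl
@[simp] lemma one_e : (1 : HH).e = 0 := rfl
@[simp] lemma inv_x (g : HH) : (g⁻¹).x = -((11:ℚ)^(-g.e) * g.x) := rfl
@[simp] lemma inv_e (g : HH) : (g⁻¹).e = -g.e := rfl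

lemma ext' {g h : HH} (hx : g.x = h.x) (he : g.e = h.e) : g = h := by
  cases g; cases h; cases hx; cases he; rfl

instance : Group HH where
  mul_assoc a b c := by
    refine ext' ?_ (by simp; ring)
    simp; rw [zpow_add₀ eleven_ne]; ring
  one_mul a := by apply ext' <;> simp
  mul_one a := by apply ext' <;> simp
  inv_mul_cancel a := by
    refine ext' ?_ (by simp)
    simp [zpow_neg]

end HH

lemma eleven_ne : (11:ℚ) ≠ 0 := by norm_num

/-- `ν z = (11^z - 1)/10`. -/
noncomputable def nn (z : ℤ) : ℚ := ((11:ℚ)^z - 1) / 10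

lemma nn_zero : nn 0 = 0 := by simp [nn]
lemma nn_one : nn 1 = 1 := by norm_num [nn]
lemma nn_cocycle (a b : ℤ) : nn (a + b) = nn a + (11:ℚ)^a * nn b := by
  unfold nn; rw [zpow_add₀ eleven_ne]; ring
lemma nn_neg (a : ℤ) : nn (-a) = -((11:ℚ)^(-a) * nn a) := by
  have h := nn_cocycle (-a) a
  simp only [neg_add_cancel, nn_zero] at h
  linarith

/-- membership in `Z[1/11]` -/
def IsR (q : ℚ) : Prop := ∃ (m : ℤ) (k : ℕ), q * 11^k = m

/-- membership in `5·Z[1/11]` -/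
def Is5R (q : ℚ) : Prop := ∃ (m : ℤ) (k : ℕ), q * 11^k = 5 * m

lemma IsR.add {q r : ℚ} (hq : IsR q) (hr : IsR r) : IsR (q + r) := by
  obtain ⟨m, k, hm⟩ := hq; obtain ⟨n, j, hn⟩ := hr
  refine ⟨m * 11^j + n * 11^k, k + j, ?_⟩
  push_cast
  rw [pow_add]; linear_combination (11:ℚ)^j * hm + (11:ℚ)^k * hn
lemma IsR.neg {q : ℚ} (hq : IsR q) : IsR (-q) := by
  obtain ⟨m, k, hm⟩ := hq; exact ⟨-m, k, by push_cast; linarith⟩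
lemma IsR.mul {q r : ℚ} (hq : IsR q) (hr : IsR r) : IsR (q * r) := by
  obtain ⟨m, k, hm⟩ := hq; obtain ⟨n, j, hn⟩ := hr
  refine ⟨m * n, k + j, ?_⟩
  push_cast
  rw [pow_add]; linear_combination r * 11^j * hm + (m:ℚ) * hn
lemma IsR.zero : IsR 0 := ⟨0, 0, by norm_num⟩
lemma IsR.one : IsR 1 := ⟨1, 0, by norm_num⟩
lemma IsR.intCast (m : ℤ) : IsR (m : ℚ) := ⟨m, 0, by norm_num⟩

lemma IsR.zpow11 (z : ℤ) : IsR ((11:ℚ)^z) := by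
  rcases z with n | n
  · exact ⟨11^n, 0, by rw [Int.ofNat_eq_coe, zpow_natCast]; push_cast; norm_num⟩
  · refine ⟨1, n+1, ?_⟩
    rw [zpow_negSucc]
    have h1 : ((11:ℚ)^(n+1)) ≠ 0 := by positivity
    field_simp
    norm_num

lemma IsR.zpow11_mul {q : ℚ} (z : ℤ) (hq : IsR q) : IsR ((11:ℚ)^z * q) :=
  (IsR.zpow11 z).mul hq

lemma Is5R.add {q r : ℚ} (hq : Is5R q) (hr : Is5R r) : Is5R (q + r) := by
  obtain ⟨m, k, hm⟩ := hq; obtain ⟨n, j, hn⟩ := hr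
  refine ⟨m * 11^j + n * 11^k, k + j, ?_⟩
  push_cast
  rw [pow_add]; linear_combination (11:ℚ)^j * hm + (11:ℚ)^k * hn
lemma Is5R.neg {q : ℚ} (hq : Is5R q) : Is5R (-q) := by
  obtain ⟨m, k, hm⟩ := hq; exact ⟨-m, k, by push_cast; linarith⟩
lemma Is5R.zero : Is5R 0 := ⟨0, 0, by norm_num⟩
lemma IsR.mul5R {q r : ℚ} (hq : IsR q) (hr : Is5R r) : Is5R (q * r) := by
  obtain ⟨m, k, hm⟩ := hq; obtain ⟨n, j, hn⟩ := hr
  refine ⟨m * n, k + j, ?_⟩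
  push_cast
  rw [pow_add]; linear_combination r * 11^j * hm + (m:ℚ) * hn
lemma Is5R.zpow11_mul {q : ℚ} (z : ℤ) (hq : Is5R q) : Is5R ((11:ℚ)^z * q) :=
  (IsR.zpow11 z).mul5R hq
lemma Is5R.isR {q : ℚ} (hq : Is5R q) : IsR q := by
  obtain ⟨m, k, hm⟩ := hq; exact ⟨5 * m, k, by push_cast; linarith⟩
lemma Is5R.sub {q r : ℚ} (hq : Is5R q) (hr : Is5R r) : Is5R (q - r) := by
  have := hq.add hr.neg; simpa [sub_eq_add_neg] using this

/-- `5 ∣ 11^n - 1` in `ℤ`. -/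
lemma int_five_dvd (n : ℕ) : ∃ m : ℤ, (11:ℤ)^n - 1 = 5 * m := by
  induction n with
  | zero => exact ⟨0, by norm_num⟩
  | succ n ih =>
    obtain ⟨m, hm⟩ := ih
    exact ⟨11 * m + 2, by rw [pow_succ]; linear_combination 11 * hm⟩

/-- `10 ∣ 11^n - 1` in `ℤ`. -/
lemma int_ten_dvd (n : ℕ) : ∃ m : ℤ, (11:ℤ)^n - 1 = 10 * m := by
  induction n with
  | zero => exact ⟨0, by norm_num⟩
  | succ n ih =>
    obtain ⟨m, hm⟩ := ih
    exact ⟨11 * m + 1, by rw [pow_succ]; linear_combination 11 * hm⟩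

lemma Is5R.zpow11_sub_one (z : ℤ) : Is5R ((11:ℚ)^z - 1) := by
  rcases z with n | n
  · obtain ⟨m, hm⟩ := int_five_dvd n
    refine ⟨m, 0, ?_⟩
    rw [Int.ofNat_eq_coe, zpow_natCast, pow_zero, mul_one]
    exact_mod_cast hm
  · obtain ⟨m, hm⟩ := int_five_dvd (n+1)
    refine ⟨-m, n+1, ?_⟩
    rw [zpow_negSucc]
    have h1 : ((11:ℚ)^(n+1)) ≠ 0 := by positivity
    have key : ((11:ℚ)^(n+1))⁻¹ * (11:ℚ)^(n+1) = 1 := inv_mul_cancel₀ h1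
    have hmq : (11:ℚ)^(n+1) - 1 = 5*(m:ℚ) := by exact_mod_cast hm
    push_cast
    linear_combination key - hmq

lemma IsR.nn (z : ℤ) : IsR (nn z) := by
  unfold _root_.nn
  rcases z with n | n
  · obtain ⟨m, hm⟩ := int_ten_dvd n
    refine ⟨m, 0, ?_⟩
    rw [Int.ofNat_eq_coe, zpow_natCast, pow_zero, mul_one]
    have hmq : (11:ℚ)^n - 1 = 10*(m:ℚ) := by exact_mod_cast hm
    rw [hmq]; ring
  · obtain ⟨m, hm⟩ := int_ten_dvd (n+1)
    refine ⟨-m, n+1, ?_⟩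
    rw [zpow_negSucc]
    have h1 : ((11:ℚ)^(n+1)) ≠ 0 := by positivity
    have key : ((11:ℚ)^(n+1))⁻¹ * (11:ℚ)^(n+1) = 1 := inv_mul_cancel₀ h1
    have hmq : (11:ℚ)^(n+1) - 1 = 10*(m:ℚ) := by exact_mod_cast hm
    push_cast
    linear_combination (key - hmq)/10

lemma not_Is5R_one : ¬ Is5R 1 := by
  rintro ⟨m, k, hm⟩
  rw [one_mul] at hm
  have : (11:ℤ)^k = 5 * m := by exact_mod_cast hm
  have h5 : (5:ℤ) ∣ 11^k := ⟨m, this⟩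
  have := Int.Prime.dvd_pow' (by norm_num) h5
  norm_num at this

lemma not_Is5R_two : ¬ Is5R 2 := by
  rintro ⟨m, k, hm⟩
  have : 2 * (11:ℤ)^k = 5 * m := by exact_mod_cast hm
  have h5 : (5:ℤ) ∣ 2 * 11^k := ⟨m, this⟩
  have hp : Prime (5:ℤ) := by norm_num
  rcases hp.dvd_mul.mp h5 with h | h
  · norm_num at h
  · have := Int.Prime.dvd_pow' (by norm_num) h
    norm_num at this

lemma not_Is5R_four : ¬ Is5R 4 := by
  rintro ⟨m, k, hm⟩
  have : 4 * (11:ℤ)^k = 5 * m := by exact_mod_cast hm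
  have h5 : (5:ℤ) ∣ 4 * 11^k := ⟨m, this⟩
  have hp : Prime (5:ℤ) := by norm_num
  rcases hp.dvd_mul.mp h5 with h | h
  · norm_num at h
  · have := Int.Prime.dvd_pow' (by norm_num) h
    norm_num at this
/-- The defining relation of the Baumslag–Solitar group `BS(1,11) = ⟨a, b | a b a⁻¹ = b¹¹⟩`,
with `a = FreeGroup.of 0` and `b = FreeGroup.of 1`. -/
def bsRels : Set (FreeGroup (Fin 2)) :=
  {FreeGroup.of 0 * FreeGroup.of 1 * (FreeGroup.of 0)⁻¹ * (FreeGroup.of 1 ^ (11 : ℕ))⁻¹}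

/-- The Baumslag–Solitar group `BS(1,11)`. -/
abbrev BS₁₁ : Type := PresentedGroup bsRels

/-- An M-transformation on `n`-vectors: one component `v i` is replaced by `v i * u` where
`u` lies in the normal closure of the remaining components; other components unchanged. -/
def MStep {G : Type*} [Group G] {n : ℕ} (v w : Fin n → G) : Prop :=
  ∃ i : Fin n, (∀ j, j ≠ i → w j = v j) ∧
    ∃ u ∈ Subgroup.normalClosure (v '' {j | j ≠ i}), w i = v i * u
namespace HH

lemma e_zpow (v : HH) : ∀ k : ℤ, (v^k).e = k * v.e := by
  intro k
  induction k using Int.induction_on with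
  | zero => simp
  | succ n ih => rw [zpow_add_one]; simp only [mul_e, ih]; ring
  | pred n ih => rw [zpow_sub_one]; simp only [mul_e, inv_e, ih]; ring

lemma x_zpow (v : HH) : ∀ k : ℤ, (v^k).x * nn v.e = v.x * nn (k * v.e) := by
  intro k
  induction k using Int.induction_on with
  | zero => simp [nn_zero]
  | succ n ih =>
    rw [zpow_add_one]
    simp only [mul_x, e_zpow]
    have h : ((n:ℤ)+1) * v.e = n * v.e + v.e := by ring
    rw [h, nn_cocycle]
    linear_combination ih
  | pred n ih =>
    rw [zpow_sub_one]
    simp only [mul_x, inv_x, inv_e, e_zpow]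
    have h : ((-n:ℤ)-1) * v.e = (-n) * v.e + (-v.e) := by ring
    rw [h, nn_cocycle, nn_neg, zpow_neg, zpow_neg]
    rw [zpow_neg] at ih
    linear_combination ih

/-- the subgroup of `HH` of elements with `x`-part in `Z[1/11]`. -/
def RZ : Subgroup HH where
  carrier := {h | IsR h.x}
  one_mem' := IsR.zero
  mul_mem' := by
    rintro g h hg hh
    exact hg.add (IsR.zpow11_mul _ hh)
  inv_mem' := by
    rintro g hg
    exact (IsR.zpow11_mul _ hg).neg

/-- crossed-homomorphism-style quantity attached to a fixed `c`. -/
noncomputable def dd (c h : HH) : ℚ := h.x * nn c.e - c.x * nn h.e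

lemma dd_self (c : HH) : dd c c = 0 := by simp [dd]

lemma dd_mul (c g h : HH) : dd c (g * h) = dd c g + (11:ℚ)^g.e * dd c h := by
  unfold dd
  simp only [mul_x, mul_e, nn_cocycle]
  ring

lemma dd_one (c : HH) : dd c 1 = 0 := by simp [dd, nn_zero]

lemma dd_inv (c g : HH) : dd c g⁻¹ = -((11:ℚ)^(-g.e) * dd c g) := by
  have h := dd_mul c g⁻¹ g
  simp only [inv_mul_cancel, dd_one, inv_e] at h
  linarith

lemma dd_conj_eq (c g u : HH) :
    dd c (g * u * g⁻¹) = (1 - (11:ℚ)^u.e) * dd c g + (11:ℚ)^g.e * dd c u := by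
  rw [dd_mul, dd_mul, dd_inv, mul_e, zpow_add₀ eleven_ne, zpow_neg]
  field_simp
  ring

lemma isR_dd {c g : HH} (hc : IsR c.x) (hg : IsR g.x) : IsR (dd c g) := by
  unfold dd
  rw [sub_eq_add_neg]
  exact (hg.mul (IsR.nn c.e)).add ((hc.mul (IsR.nn g.e)).neg)

lemma is5R_dd_conj {c g u : HH} (hc : IsR c.x) (hg : IsR g.x)
    (hu : Is5R (dd c u)) : Is5R (dd c (g * u * g⁻¹)) := by
  rw [dd_conj_eq]
  have h1 : Is5R ((1 - (11:ℚ)^u.e) * dd c g) := by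
    have := (isR_dd hc hg).mul5R ((Is5R.zpow11_sub_one u.e).neg)
    have he : (1 - (11:ℚ)^u.e) * dd c g = dd c g * -((11:ℚ)^u.e - 1) := by ring
    rw [he]; exact this
  exact h1.add (hu.zpow11_mul g.e)

lemma dd_zpow_self (v : HH) (k : ℤ) : dd v (v^k) = 0 := by
  unfold dd
  rw [e_zpow, x_zpow]
  ring

/-- the "determinant" of a pair. -/
noncomputable def Dl (g h : HH) : ℚ := g.x * nn h.e - h.x * nn g.e

lemma Dl_swap (g h : HH) : Dl g h = -Dl h g := by unfold Dl; ring

lemma Dl_mul_zpow (v₁ v₂ : HH) (k : ℤ) : Dl (v₁ * v₂^k) v₂ = Dl v₁ v₂ := by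
  unfold Dl
  simp only [mul_x, mul_e, e_zpow, nn_cocycle]
  have h := x_zpow v₂ k
  linear_combination (11:ℚ)^v₁.e * h

/-- affine congruence subgroups used as certificates. -/
def SS (c d : ℚ) : Subgroup HH where
  carrier := {h | ∃ r, IsR r ∧ h.x - c * nn h.e = d * r}
  one_mem' := ⟨0, IsR.zero, by simp [nn_zero]⟩
  mul_mem' := by
    rintro g h ⟨r, hr, hgr⟩ ⟨s, hs, hhs⟩
    refine ⟨r + (11:ℚ)^g.e * s, hr.add (IsR.zpow11_mul _ hs), ?_⟩
    simp only [mul_x, mul_e, nn_cocycle]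
    linear_combination hgr + (11:ℚ)^g.e * hhs
  inv_mem' := by
    rintro g ⟨r, hr, hgr⟩
    refine ⟨-((11:ℚ)^(-g.e) * r), (IsR.zpow11_mul _ hr).neg, ?_⟩
    simp only [inv_x, inv_e, nn_neg]
    linear_combination -((11:ℚ)^(-g.e)) * hgr

/-- exponent divisibility subgroups. -/
def DD (d : ℤ) : Subgroup HH where
  carrier := {h | d ∣ h.e}
  one_mem' := ⟨0, by simp⟩
  mul_mem' := by rintro g h hg hh; exact dvd_add hg hh
  inv_mem' := by rintro g hg; exact (dvd_neg).2 hg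

end HH
lemma Is5R_ten : Is5R 10 := ⟨2, 0, by norm_num⟩

lemma int_pow_diff_5 (s k : ℕ) : ∃ t : ℤ, (11:ℤ)^s - 11^k = 5 * t := by
  obtain ⟨a, ha⟩ := int_five_dvd s
  obtain ⟨b, hb⟩ := int_five_dvd k
  exact ⟨a - b, by linarith⟩

/-- a unit of `Z[1/11]` is `± 11^z`, hence `≡ ±1 mod 5`. -/
lemma unit_pm {x r : ℚ} (hx : IsR x) (hr : IsR r) (h : x * r = 1) :
    Is5R (x - 1) ∨ Is5R (x + 1) := by
  obtain ⟨m, k, hm⟩ := hx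
  obtain ⟨n, j, hn⟩ := hr
  have hmn : (m:ℚ) * n = 11^(k+j) := by
    rw [pow_add]
    linear_combination -(r * 11^j) * hm - (m:ℚ) * hn + 11^k * 11^j * h
  have hmnz : m * n = (11:ℤ)^(k+j) := by exact_mod_cast hmn
  have hdvd : m.natAbs ∣ 11^(k+j) := by
    have : m ∣ (11:ℤ)^(k+j) := ⟨n, hmnz.symm⟩
    have h2 : m.natAbs ∣ ((11:ℤ)^(k+j)).natAbs := Int.natAbs_dvd_natAbs.mpr this
    simpa [Int.natAbs_pow] using h2
  obtain ⟨s, _, hs⟩ := (Nat.dvd_prime_pow (by norm_num : Nat.Prime 11)).1 hdvd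
  rcases Int.natAbs_eq m with hme | hme
  · left
    obtain ⟨t, ht⟩ := int_pow_diff_5 s k
    refine ⟨t, k, ?_⟩
    have hms : (m:ℚ) = 11^s := by
      rw [hme, hs]; push_cast; ring
    have htq : (11:ℚ)^s - 11^k = 5 * t := by exact_mod_cast ht
    linear_combination hm + hms + htq
  · right
    obtain ⟨t, ht⟩ := int_pow_diff_5 k s
    refine ⟨t, k, ?_⟩
    have hms : (m:ℚ) = -(11^s) := by
      rw [hme, hs]; push_cast; ring
    have htq : (11:ℚ)^k - 11^s = 5 * t := by exact_mod_cast ht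
    linear_combination hm + hms + htq

namespace HH

/-- `a`-image and `b`-image in `HH`. -/
def ta : HH := ⟨0, 1⟩
def tb : HH := ⟨1, 0⟩

/-- Main Euclid lemma: a pair with `x`-parts in `Z[1/11]` whose closure contains
`ta` and `tb` has determinant `≡ ±1 mod 5·Z[1/11]`. -/
lemma euclid : ∀ n : ℕ, ∀ v₁ v₂ : HH, IsR v₁.x → IsR v₂.x →
    ta ∈ Subgroup.closure {v₁, v₂} → tb ∈ Subgroup.closure {v₁, v₂} →
    v₂.e.natAbs = n → Is5R (Dl v₁ v₂ - 1) ∨ Is5R (Dl v₁ v₂ + 1) := by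
  intro n
  induction n using Nat.strong_induction_on with
  | _ n IH =>
    intro v₁ v₂ hx1 hx2 hta htb hn
    rcases Nat.eq_zero_or_pos n with hz | hpos
    · -- base case : v₂.e = 0
      subst hz
      have he2 : v₂.e = 0 := by
        have := Int.natAbs_eq_zero.mp hn
        exact this
      -- v₁.e divides everything in the closure's e-part
      have hdd : Subgroup.closure {v₁, v₂} ≤ DD v₁.e := by
        rw [Subgroup.closure_le]
        intro g hg
        simp only [Set.mem_insert_iff, Set.mem_singleton_iff] at hg
        rcases hg with h | h
        · rw [h]; exact dvd_refl _
        · rw [h]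
          show v₁.e ∣ v₂.e
          simp [he2]
      have h1 : v₁.e ∣ (1:ℤ) := hdd hta
      have he1 : v₁.e = 1 ∨ v₁.e = -1 := Int.isUnit_iff.mp (isUnit_of_dvd_one h1)
      -- certificate subgroup
      have key : ∃ r, IsR r ∧ v₂.x * r = 1 := by
        obtain ⟨c, hc⟩ : ∃ c : ℚ, v₁.x - c * nn v₁.e = 0 := by
          rcases he1 with h | h
          · exact ⟨v₁.x, by rw [h, nn_one]; ring⟩
          · refine ⟨-11 * v₁.x, ?_⟩
            rw [h]
            have : nn (-1 : ℤ) = -(1/11 : ℚ) := by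
              have := nn_neg 1
              rw [nn_one] at this
              rw [this]
              norm_num
            rw [this]; ring
        have hsub : Subgroup.closure {v₁, v₂} ≤ SS c v₂.x := by
          rw [Subgroup.closure_le]
          intro g hg
          simp only [Set.mem_insert_iff, Set.mem_singleton_iff] at hg
          rcases hg with h | h
          · rw [h]; exact ⟨0, IsR.zero, by rw [hc]; ring⟩
          · rw [h]; exact ⟨1, IsR.one, by rw [he2, nn_zero]; ring⟩
        have := hsub htb
        obtain ⟨r, hr, hrr⟩ := this
        refine ⟨r, hr, ?_⟩
        have : (1:ℚ) - c * nn (0:ℤ) = v₂.x * r := hrr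
        rw [nn_zero] at this
        linarith [this]
      obtain ⟨r, hr, hur⟩ := key
      have hpm := unit_pm hx2 hr hur
      -- Dl v₁ v₂ = - v₂.x * nn v₁.e
      have hDl : Dl v₁ v₂ = -(v₂.x * nn v₁.e) := by
        unfold Dl; rw [he2, nn_zero]; ring
      rcases he1 with h | h
      · rw [hDl, h, nn_one]
        rcases hpm with hp | hp
        · right
          have : -(v₂.x * 1) + 1 = -(v₂.x - 1) := by ring
          rw [this]; exact hp.neg
        · left
          have : -(v₂.x * 1) - 1 = -(v₂.x + 1) := by ring
          rw [this]; exact hp.neg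
      · have hnn : nn (-1 : ℤ) = -((11:ℚ)^(-1:ℤ) * 1) := by
          have := nn_neg 1
          rwa [nn_one] at this
        rw [hDl, h, hnn]
        rcases hpm with hp | hp
        · left
          have heq : -(v₂.x * -((11:ℚ)^(-1:ℤ) * 1)) - 1 = (11:ℚ)^(-1:ℤ) * ((v₂.x - 1) - 10) := by
            rw [zpow_neg]
            field_simp
            ring
          rw [heq]
          exact (hp.sub Is5R_ten).zpow11_mul _
        · right
          have heq : -(v₂.x * -((11:ℚ)^(-1:ℤ) * 1)) + 1 = (11:ℚ)^(-1:ℤ) * ((v₂.x + 1) + 10) := by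
            rw [zpow_neg]
            field_simp
            ring
          rw [heq]
          exact (hp.add Is5R_ten).zpow11_mul _
    · -- inductive step : v₂.e ≠ 0
      have he2 : v₂.e ≠ 0 := by
        intro h
        rw [h] at hn
        simp at hn
        omega
      set q := v₁.e / v₂.e with hq
      set v₁' := v₁ * v₂^(-q) with hv₁'
      have he1' : v₁'.e = v₁.e % v₂.e := by
        rw [hv₁', mul_e, e_zpow, Int.emod_def, hq]
        ring
      have hlt : (v₁.e % v₂.e).natAbs < n := by
        rw [← hn]
        rcases lt_or_gt_of_ne he2 with hneg | hposs
        · have h1 : 0 ≤ v₁.e % v₂.e := Int.emod_nonneg _ he2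
          have h2 : v₁.e % v₂.e < -v₂.e := by
            have := Int.emod_lt_of_pos v₁.e (by omega : 0 < -v₂.e)
            rwa [Int.emod_neg] at this
          omega
        · have h1 : 0 ≤ v₁.e % v₂.e := Int.emod_nonneg _ he2
          have h2 : v₁.e % v₂.e < v₂.e := Int.emod_lt_of_pos v₁.e hposs
          omega
      -- closure equality
      have hceq : Subgroup.closure {v₂, v₁'} = Subgroup.closure {v₁, v₂} := by
        apply le_antisymm
        · rw [Subgroup.closure_le]
          intro g hg
          simp only [Set.mem_insert_iff, Set.mem_singleton_iff] at hg
          rcases hg with h | h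
          · rw [h]; exact Subgroup.subset_closure (by simp)
          · rw [h, hv₁']
            exact Subgroup.mul_mem _ (Subgroup.subset_closure (by simp))
              (Subgroup.zpow_mem _ (Subgroup.subset_closure (by simp)) _)
        · rw [Subgroup.closure_le]
          intro g hg
          simp only [Set.mem_insert_iff, Set.mem_singleton_iff] at hg
          rcases hg with h | h
          · have hv : v₁ = v₁' * v₂^q := by
              rw [hv₁', mul_assoc, zpow_neg, inv_mul_cancel, mul_one]
            rw [h, hv]
            exact Subgroup.mul_mem _ (Subgroup.subset_closure (by simp))
              (Subgroup.zpow_mem _ (Subgroup.subset_closure (by simp)) _)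
          · rw [h]; exact Subgroup.subset_closure (by simp)
      have hx1' : IsR v₁'.x := by
        have hmem : v₁' ∈ RZ := RZ.mul_mem hx1 (RZ.zpow_mem hx2 _)
        exact hmem
      have := IH (v₁.e % v₂.e).natAbs hlt v₂ v₁' hx2 hx1'
        (by rw [hceq]; exact hta) (by rw [hceq]; exact htb) (by rw [he1'])
      have hD : Dl v₂ v₁' = -(Dl v₁ v₂) := by
        rw [hv₁', Dl_swap, Dl_mul_zpow]
      rw [hD] at this
      rcases this with h | h
      · right
        have : Dl v₁ v₂ + 1 = -(-(Dl v₁ v₂) - 1) := by ring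
        rw [this]; exact h.neg
      · left
        have : Dl v₁ v₂ - 1 = -(-(Dl v₁ v₂) + 1) := by ring
        rw [this]; exact h.neg

end HH
namespace HH

lemma Dl_mul_right (g h u : HH) : Dl (g * u) h = Dl g h + (11:ℚ)^g.e * dd h u := by
  unfold Dl dd
  simp only [mul_x, mul_e, nn_cocycle]
  ring

lemma Dl_mul_left (g h u : HH) : Dl g (h * u) = Dl g h - (11:ℚ)^h.e * dd g u := by
  unfold Dl dd
  simp only [mul_x, mul_e, nn_cocycle]
  ring

lemma tb_pow (n : ℕ) : tb^n = ⟨n, 0⟩ := by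
  induction n with
  | zero => rfl
  | succ n ih =>
    rw [pow_succ, ih]
    apply ext'
    · show (n:ℚ) + (11:ℚ)^(0:ℤ) * 1 = ((n:ℕ)+1 : ℕ)
      push_cast; norm_num
    · show (0:ℤ) + 0 = 0
      norm_num

end HH

def fgen : Fin 2 → HH := ![HH.ta, HH.tb]

lemma relcheck : ∀ r ∈ bsRels, FreeGroup.lift fgen r = 1 := by
  intro r hr
  simp only [bsRels, Set.mem_singleton_iff] at hr
  subst hr
  simp only [map_mul, map_inv, map_pow, FreeGroup.lift_apply_of]
  have h0 : fgen 0 = HH.ta := rfl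
  have h1 : fgen 1 = HH.tb := rfl
  rw [h0, h1, HH.tb_pow]
  apply HH.ext'
  · show (0:ℚ) + (11:ℚ)^(1:ℤ) * 1 + (11:ℚ)^((1:ℤ)+0) * (-((11:ℚ)^(-((1:ℤ)+0)) * 0))
      + (11:ℚ)^((1:ℤ)+0+(-((1:ℤ)+0))) * (-((11:ℚ)^(-(0:ℤ)) * ((11:ℕ):ℚ))) = 0
    norm_num
  · show (1:ℤ) + 0 + (-((1:ℤ)+0)) + (-(0:ℤ)) = 0
    norm_num

noncomputable def piH : BS₁₁ →* HH := PresentedGroup.toGroup relcheck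

def ga : BS₁₁ := PresentedGroup.of 0
def gb : BS₁₁ := PresentedGroup.of 1

lemma piH_a : piH ga = HH.ta := PresentedGroup.toGroup.of relcheck
lemma piH_b : piH gb = HH.tb := PresentedGroup.toGroup.of relcheck

lemma piH_mem_RZ (g : BS₁₁) : piH g ∈ HH.RZ := by
  have htop : (Subgroup.closure (Set.range (PresentedGroup.of : Fin 2 → BS₁₁))) = ⊤ :=
    PresentedGroup.closure_range_of bsRels
  have hle : Subgroup.closure (Set.range (PresentedGroup.of : Fin 2 → BS₁₁))
      ≤ Subgroup.comap piH HH.RZ := by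
    rw [Subgroup.closure_le]
    rintro _ ⟨i, rfl⟩
    fin_cases i
    · show piH ga ∈ HH.RZ
      rw [piH_a]; exact IsR.zero
    · show piH gb ∈ HH.RZ
      rw [piH_b]; exact IsR.one
  have := htop ▸ hle
  exact this (Subgroup.mem_top g)

lemma piH_x_isR (g : BS₁₁) : IsR (piH g).x := piH_mem_RZ g

/-- pullback of the `dd`-congruence condition: a subgroup of `BS₁₁`. -/
def NG (c : HH) : Subgroup BS₁₁ where
  carrier := {g | Is5R (HH.dd c (piH g))}
  one_mem' := by
    show Is5R (HH.dd c (piH 1))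
    rw [map_one, HH.dd_one]; exact Is5R.zero
  mul_mem' := by
    intro g h hg hh
    show Is5R (HH.dd c (piH (g * h)))
    rw [map_mul, HH.dd_mul]
    exact Is5R.add hg (Is5R.zpow11_mul _ hh)
  inv_mem' := by
    intro g hg
    show Is5R (HH.dd c (piH g⁻¹))
    rw [map_inv, HH.dd_inv]
    exact (Is5R.zpow11_mul _ hg).neg

lemma NG_normal (c : HH) (hc : IsR c.x) : (NG c).Normal := by
  constructor
  intro u hu g
  show Is5R (HH.dd c (piH (g * u * g⁻¹)))
  rw [map_mul, map_mul, map_inv]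
  exact HH.is5R_dd_conj hc (piH_x_isR g) hu

/-- determinant invariant of a pair in `BS₁₁`. -/
noncomputable def DD2 (w : Fin 2 → BS₁₁) : ℚ := HH.Dl (piH (w 0)) (piH (w 1))

lemma image_ne_zero (v : Fin 2 → BS₁₁) : v '' {j | j ≠ 0} = {v 1} := by
  ext z
  constructor
  · rintro ⟨j, hj, rfl⟩
    have : j = 1 := by
      simp only [Set.mem_setOf_eq] at hj
      omega
    rw [this]; rfl
  · rintro rfl
    exact ⟨1, by simp, rfl⟩

lemma image_ne_one (v : Fin 2 → BS₁₁) : v '' {j | j ≠ 1} = {v 0} := by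
  ext z
  constructor
  · rintro ⟨j, hj, rfl⟩
    have : j = 0 := by
      simp only [Set.mem_setOf_eq] at hj
      omega
    rw [this]; rfl
  · rintro rfl
    exact ⟨0, by simp, rfl⟩

lemma mstep_inv {v w : Fin 2 → BS₁₁} (h : MStep v w) : Is5R (DD2 w - DD2 v) := by
  obtain ⟨i, hfix, u, hu, hwi⟩ := h
  have hi : i = 0 ∨ i = 1 := by omega
  rcases hi with rfl | rfl
  · have hw1 : w 1 = v 1 := hfix 1 (by omega)
    rw [image_ne_zero] at hu
    have hnorm : (NG (piH (v 1))).Normal := NG_normal _ (piH_x_isR _)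
    have hmem : v 1 ∈ NG (piH (v 1)) := by
      show Is5R (HH.dd (piH (v 1)) (piH (v 1)))
      rw [HH.dd_self]; exact Is5R.zero
    have hle : Subgroup.normalClosure {v 1} ≤ NG (piH (v 1)) :=
      Subgroup.normalClosure_le_normal (by rintro g rfl; exact hmem)
    have hdu : Is5R (HH.dd (piH (v 1)) (piH u)) := hle hu
    have heq : DD2 w - DD2 v = (11:ℚ)^(piH (v 0)).e * HH.dd (piH (v 1)) (piH u) := by
      unfold DD2
      rw [hw1, hwi, map_mul, HH.Dl_mul_right]
      ring
    rw [heq]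
    exact Is5R.zpow11_mul _ hdu
  · have hw0 : w 0 = v 0 := hfix 0 (by omega)
    rw [image_ne_one] at hu
    have hnorm : (NG (piH (v 0))).Normal := NG_normal _ (piH_x_isR _)
    have hmem : v 0 ∈ NG (piH (v 0)) := by
      show Is5R (HH.dd (piH (v 0)) (piH (v 0)))
      rw [HH.dd_self]; exact Is5R.zero
    have hle : Subgroup.normalClosure {v 0} ≤ NG (piH (v 0)) :=
      Subgroup.normalClosure_le_normal (by rintro g rfl; exact hmem)
    have hdu : Is5R (HH.dd (piH (v 0)) (piH u)) := hle hu
    have heq : DD2 w - DD2 v = -((11:ℚ)^(piH (v 1)).e * HH.dd (piH (v 0)) (piH u)) := by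
      unfold DD2
      rw [hw0, hwi, map_mul, HH.Dl_mul_left]
      ring
    rw [heq]
    exact (Is5R.zpow11_mul _ hdu).neg

lemma chain_inv {s w : Fin 2 → BS₁₁} (h : Relation.ReflTransGen MStep s w) :
    Is5R (DD2 w - DD2 s) := by
  induction h with
  | refl => simpa using Is5R.zero
  | tail _ hstep ih =>
    have h2 := mstep_inv hstep
    have : Is5R ((DD2 _ - DD2 _) + (DD2 _ - DD2 s)) := h2.add ih
    simpa using this

lemma range_fin2 {α : Type*} (v : Fin 2 → α) : Set.range v = {v 0, v 1} := by
  ext z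
  constructor
  · rintro ⟨i, rfl⟩
    have hi : i = 0 ∨ i = 1 := by omega
    rcases hi with rfl | rfl
    · exact Or.inl rfl
    · exact Or.inr rfl
  · rintro (rfl | rfl)
    · exact ⟨0, rfl⟩
    · exact ⟨1, rfl⟩
lemma bs_relation : ga * gb * ga⁻¹ * (gb^(11:ℕ))⁻¹ = 1 := by
  have hmem : (FreeGroup.of 0 * FreeGroup.of 1 * (FreeGroup.of 0)⁻¹
      * (FreeGroup.of 1 ^ (11 : ℕ))⁻¹ : FreeGroup (Fin 2)) ∈ Subgroup.normalClosure bsRels :=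
    Subgroup.subset_normalClosure (by simp [bsRels])
  have h1 : PresentedGroup.mk bsRels (FreeGroup.of 0 * FreeGroup.of 1 * (FreeGroup.of 0)⁻¹
      * (FreeGroup.of 1 ^ (11 : ℕ))⁻¹) = 1 := (QuotientGroup.eq_one_iff _).2 hmem
  rw [map_mul, map_mul, map_inv, map_inv, map_pow] at h1
  exact h1

lemma bs_b_ten : gb^(10:ℕ) = ga * (gb * ga⁻¹ * gb⁻¹) := by
  have h2 : ga * gb * ga⁻¹ = gb^(11:ℕ) := mul_inv_eq_one.mp bs_relation
  calc gb^(10:ℕ) = gb^(11:ℕ) * gb⁻¹ := by group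
  _ = (ga * gb * ga⁻¹) * gb⁻¹ := by rw [h2]
  _ = ga * (gb * ga⁻¹ * gb⁻¹) := by group

/-- the chosen pair: `(a, b³)`. -/
noncomputable def spair : Fin 2 → BS₁₁ := ![ga, gb^(3:ℕ)]

lemma spair_normal_gen : Subgroup.normalClosure (Set.range spair) = ⊤ := by
  have hr : Set.range spair = {ga, gb^(3:ℕ)} := range_fin2 spair
  rw [hr]
  set N := Subgroup.normalClosure ({ga, gb^(3:ℕ)} : Set BS₁₁) with hN
  have hnormal : N.Normal := Subgroup.normalClosure_normal
  have ha : ga ∈ N := Subgroup.subset_normalClosure (Or.inl rfl)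
  have hb3 : gb^(3:ℕ) ∈ N := Subgroup.subset_normalClosure (Or.inr rfl)
  have hb10 : gb^(10:ℕ) ∈ N := by
    rw [bs_b_ten]
    exact N.mul_mem ha (hnormal.conj_mem _ (N.inv_mem ha) gb)
  have hb : gb ∈ N := by
    have h : gb = gb^(10:ℕ) * ((gb^(3:ℕ))⁻¹)^(3:ℕ) := by group
    rw [h]
    exact N.mul_mem hb10 (N.pow_mem (N.inv_mem hb3) 3)
  rw [eq_top_iff, ← PresentedGroup.closure_range_of bsRels, Subgroup.closure_le]
  rintro _ ⟨i, rfl⟩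
  fin_cases i
  · exact ha
  · exact hb

theorem bs_one_eleven_infinite_recalcitrance' :
    ∃ s : Fin 2 → BS₁₁, Subgroup.normalClosure (Set.range s) = ⊤ ∧
      ∀ w : Fin 2 → BS₁₁, Relation.ReflTransGen MStep s w →
        Subgroup.closure (Set.range w) ≠ ⊤ := by
  refine ⟨spair, spair_normal_gen, ?_⟩
  intro w hchain hgen
  -- the invariant: DD2 w ≡ -3 mod 5·Z[1/11]
  have hDs : DD2 spair = -3 := by
    show HH.Dl (piH (spair 0)) (piH (spair 1)) = -3
    have h0 : spair 0 = ga := rfl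
    have h1 : spair 1 = gb^(3:ℕ) := rfl
    rw [h0, h1, piH_a, map_pow, piH_b, HH.tb_pow]
    show HH.ta.x * nn (⟨((3:ℕ):ℚ), 0⟩ : HH).e - (⟨((3:ℕ):ℚ), 0⟩ : HH).x * nn HH.ta.e = -3
    show (0:ℚ) * nn 0 - ((3:ℕ):ℚ) * nn 1 = -3
    rw [nn_zero, nn_one]
    norm_num
  have hch : Is5R (DD2 w + 3) := by
    have h := chain_inv hchain
    rw [hDs] at h
    simpa [sub_neg_eq_add] using h
  -- generation pushes to HH
  have hmap : (Subgroup.closure (Set.range w)).map piH = Subgroup.closure (piH '' Set.range w) :=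
    MonoidHom.map_closure piH _
  rw [hgen] at hmap
  have himg : piH '' Set.range w = {piH (w 0), piH (w 1)} := by
    rw [range_fin2 w, Set.image_insert_eq, Set.image_singleton]
  rw [himg] at hmap
  have hta : HH.ta ∈ Subgroup.closure {piH (w 0), piH (w 1)} := by
    rw [← hmap]
    exact ⟨ga, Subgroup.mem_top _, piH_a⟩
  have htb : HH.tb ∈ Subgroup.closure {piH (w 0), piH (w 1)} := by
    rw [← hmap]
    exact ⟨gb, Subgroup.mem_top _, piH_b⟩
  have heuclid := HH.euclid (piH (w 1)).e.natAbs (piH (w 0)) (piH (w 1))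
    (piH_x_isR _) (piH_x_isR _) hta htb rfl
  have hDw : HH.Dl (piH (w 0)) (piH (w 1)) = DD2 w := rfl
  rw [hDw] at heuclid
  rcases heuclid with h | h
  · have h4 : (4:ℚ) = (DD2 w + 3) - (DD2 w - 1) := by ring
    exact not_Is5R_four (h4 ▸ hch.sub h)
  · have h2 : (2:ℚ) = (DD2 w + 3) - (DD2 w + 1) := by ring
    exact not_Is5R_two (h2 ▸ hch.sub h)

/-- `BS(1,11)` has a normally generating pair of infinite recalcitrance:
a pair whose normal closure is the whole group but which cannot be transformed into a
generating pair by any finite sequence of M-transformations. -/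
theorem bs_one_eleven_infinite_recalcitrance :
    ∃ s : Fin 2 → BS₁₁, Subgroup.normalClosure (Set.range s) = ⊤ ∧
      ∀ w : Fin 2 → BS₁₁, Relation.ReflTransGen MStep s w →
        Subgroup.closure (Set.range w) ≠ ⊤ :=
  bs_one_eleven_infinite_recalcitrance'
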